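/- Let T be a triangulated category with coproducts, let S ⊆ T be a pre-aisle that is closed in T under coproducts, and let t be an object of T. Then the functor H_S(−,t) : Tᵒᵖ → Ab respects products: for every set {x_λ, λ ∈ Λ} of objects of T, the natural map H_S(∐_{λ∈Λ} x_λ, t) → ∏_{λ∈Λ} H_S(x_λ, t) induced by the coproduct injections is an isomorphism. -/

import Mathlib

open CategoryTheory CategoryTheory.Limits CategoryTheory.Pretriangulated ZeroObject

universe v u

variable {C : Type u} [Category.{v} C] [Preadditive C] [HasZeroObject C]
  [HasShift C ℤ] [∀ n : ℤ, (CategoryTheory.shiftFunctor C n).Additive] [Pretriangulated C]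
  [IsTriangulated C]

/-- A pre-aisle in a triangulated category: a full additive subcategory closed under
suspension, extensions and direct summands. -/
structure IsPreaisle (S : Set C) : Prop where
  zero_mem : (0 : C) ∈ S
  shift_mem : ∀ s ∈ S, (s⟦(1 : ℤ)⟧ : C) ∈ S
  ext_mem : ∀ T : Triangle C, T ∈ (distTriang C) → T.obj₁ ∈ S → T.obj₃ ∈ S → T.obj₂ ∈ S
  summand_mem : ∀ x s : C, s ∈ S → ∀ (i : x ⟶ s) (r : s ⟶ x), i ≫ r = 𝟙 x → x ∈ S

/-- The class `H̃_S(t,t')` of pairs of composable morphisms `t ⟶ s ⟶ t'` with `s ∈ S`. -/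
structure HTilde (S : Set C) (t t' : C) where
  s : C
  mem : s ∈ S
  f : t ⟶ s
  g : s ⟶ t'

/-- The relation `R(t,t')` on `H̃_S(t,t')`. -/
def HRel (S : Set C) {t t' : C} (h h' : HTilde S t t') : Prop :=
  ∃ (s'' : C) (_ : s'' ∈ S) (u : h.s ⟶ s'') (u' : h'.s ⟶ s'') (v : s'' ⟶ t'),
    h.f ≫ u = h'.f ≫ u' ∧ u ≫ v = h.g ∧ u' ≫ v = h'.g

/-- The quotient `H_S(t,t')` of `H̃_S(t,t')` by the equivalence relation `R(t,t')`. -/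
def HQuot (S : Set C) (t t' : C) := Quot (HRel S (t := t) (t' := t'))

/-!
Surjectivity: representatives `x_λ → s_λ → t` glue to `∐ x_λ → ∐ s_λ → t`, and `∐ s_λ ∈ S`.

Injectivity: two classes can be represented as `[f, g]` and `[f', g]` with a common
`g : s ⟶ t`. They agree iff `f - f'` is killed by some `w : s ⟶ s'` with `s' ∈ S` through which
`g` factors (`KilledOver`). Passing between `w` and its fiber `a : y ⟶ s`, this says that
`f - f'` factors through some `a` with `y⟦1⟧ ∈ S` and `a ≫ g = 0`. The latter condition can be
checked on each summand of `∐ x_λ` separately, because `S` is closed under coproducts and the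
shift commutes with them.
-/

namespace IsPreaisle

variable {S : Set C}

lemma iso_mem (hS : IsPreaisle S) {x s : C} (e : x ≅ s) (hs : s ∈ S) : x ∈ S :=
  hS.summand_mem x s hs e.hom e.inv e.hom_inv_id

lemma biprod_mem (hS : IsPreaisle S) {a b : C} (ha : a ∈ S) (hb : b ∈ S) : (a ⊞ b : C) ∈ S :=
  hS.ext_mem _ (binaryBiproductTriangle_distinguished a b) ha hb

lemma obj₃_mem (hS : IsPreaisle S) {T : Triangle C} (hT : T ∈ distTriang C)
    (h₁ : (T.obj₁⟦(1 : ℤ)⟧ : C) ∈ S) (h₂ : T.obj₂ ∈ S) : T.obj₃ ∈ S :=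
  hS.ext_mem T.rotate (rot_of_distTriang T hT) h₂ h₁

lemma shift_obj₁_mem (hS : IsPreaisle S) {T : Triangle C} (hT : T ∈ distTriang C)
    (h₂ : T.obj₂ ∈ S) (h₃ : T.obj₃ ∈ S) : (T.obj₁⟦(1 : ℤ)⟧ : C) ∈ S :=
  hS.ext_mem T.rotate.rotate (rot_of_distTriang _ (rot_of_distTriang T hT)) h₃
    (hS.shift_mem _ h₂)

lemma shift_sigma_mem [HasCoproducts.{v} C] (hS : IsPreaisle S)
    (hScoprod : ∀ {ι : Type v} (xs : ι → C), (∀ i, xs i ∈ S) → (∐ xs : C) ∈ S)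
    {ι : Type v} {y : ι → C} (hy : ∀ i, ((y i)⟦(1 : ℤ)⟧ : C) ∈ S) :
    ((∐ y : C)⟦(1 : ℤ)⟧ : C) ∈ S :=
  hS.iso_mem (asIso (sigmaComparison (shiftFunctor C (1 : ℤ)) y)).symm (hScoprod _ hy)

end IsPreaisle

def KilledOver (S : Set C) {x s t : C} (d : x ⟶ s) (g : s ⟶ t) : Prop :=
  ∃ (s' : C) (_ : s' ∈ S) (w : s ⟶ s') (g' : s' ⟶ t), d ≫ w = 0 ∧ w ≫ g' = g

lemma KilledOver.precomp {S : Set C} {x' x s t : C} {d : x ⟶ s} {g : s ⟶ t}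
    (h : KilledOver S d g) (e : x' ⟶ x) : KilledOver S (e ≫ d) g := by
  obtain ⟨s', hs', w, g', hdw, hwg⟩ := h
  exact ⟨s', hs', w, g', by rw [Category.assoc, hdw, comp_zero], hwg⟩

namespace IsPreaisle

variable {S : Set C}

/-- Take `w` to be the third morphism of a triangle on `d`. -/
lemma killedOver_of_comp_eq_zero (hS : IsPreaisle S) {y s t : C}
    (hy : (y⟦(1 : ℤ)⟧ : C) ∈ S) (hs : s ∈ S) {d : y ⟶ s} {g : s ⟶ t} (hdg : d ≫ g = 0) :
    KilledOver S d g := by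
  obtain ⟨s', w, δ, mem⟩ := distinguished_cocone_triangle d
  obtain ⟨g', hg'⟩ := Triangle.yoneda_exact₂ _ mem g hdg
  exact ⟨s', hS.obj₃_mem mem hy hs, w, g', comp_distTriang_mor_zero₁₂ _ mem, hg'.symm⟩

/-- Take `a` to be the fiber of `w`. -/
lemma exists_factor_of_killedOver (hS : IsPreaisle S) {x s t : C} (hs : s ∈ S)
    {d : x ⟶ s} {g : s ⟶ t} (h : KilledOver S d g) :
    ∃ (y : C) (_ : (y⟦(1 : ℤ)⟧ : C) ∈ S) (a : y ⟶ s) (e : x ⟶ y), a ≫ g = 0 ∧ e ≫ a = d := by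
  obtain ⟨s', hs', w, g', hdw, hwg⟩ := h
  obtain ⟨y, a, δ, mem⟩ := distinguished_cocone_triangle₁ w
  obtain ⟨e, he⟩ := Triangle.coyoneda_exact₂ _ mem d hdw
  have haw : a ≫ w = 0 := comp_distTriang_mor_zero₁₂ _ mem
  exact ⟨y, hS.shift_obj₁_mem mem hs hs', a, e,
    by rw [← hwg, ← Category.assoc, haw, zero_comp], he.symm⟩

lemma killedOver_of_forall_sigma_ι [HasCoproducts.{v} C] (hS : IsPreaisle S)
    (hScoprod : ∀ {ι : Type v} (xs : ι → C), (∀ i, xs i ∈ S) → (∐ xs : C) ∈ S)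
    {Λ : Type v} {x : Λ → C} {s t : C} (hs : s ∈ S) {d : ∐ x ⟶ s} {g : s ⟶ t}
    (h : ∀ l, KilledOver S (Sigma.ι x l ≫ d) g) : KilledOver S d g := by
  choose y hy a e hag hea using fun l => hS.exists_factor_of_killedOver hs (h l)
  have hd : Sigma.desc (fun l => e l ≫ Sigma.ι y l) ≫ Sigma.desc a = d := by
    ext l
    simp [hea]
  rw [← hd]
  exact (hS.killedOver_of_comp_eq_zero (hS.shift_sigma_mem hScoprod hy) hs
    (by ext l; simp [hag])).precomp _

lemma exists_coequalizing (hS : IsPreaisle S) {s₁ s₂ t : C} (h₁ : s₁ ∈ S) (h₂ : s₂ ∈ S)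
    {u v : s₁ ⟶ s₂} {g : s₂ ⟶ t} (huv : u ≫ g = v ≫ g) :
    ∃ (s₃ : C) (_ : s₃ ∈ S) (w : s₂ ⟶ s₃) (g₃ : s₃ ⟶ t), u ≫ w = v ≫ w ∧ w ≫ g₃ = g := by
  obtain ⟨s₃, hs₃, w, g₃, huvw, hwg⟩ := hS.killedOver_of_comp_eq_zero (hS.shift_mem _ h₁) h₂
    (d := u - v) (by rw [Preadditive.sub_comp, huv, sub_self])
  rw [Preadditive.sub_comp, sub_eq_zero] at huvw
  exact ⟨s₃, hs₃, w, g₃, huvw, hwg⟩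

end IsPreaisle

lemma HRel.equivalence {S : Set C} (hS : IsPreaisle S) (t t' : C) :
    Equivalence (HRel S (t := t) (t' := t')) where
  refl h := ⟨h.s, h.mem, 𝟙 _, 𝟙 _, h.g, rfl, Category.id_comp _, Category.id_comp _⟩
  symm := fun ⟨a, ha, u, u', v, e₁, e₂, e₃⟩ => ⟨a, ha, u', u, v, e₁.symm, e₃, e₂⟩
  trans := by
    rintro h₁ h₂ h₃ ⟨a, ha, u, u', va, e₁, e₂, e₃⟩ ⟨b, hb, w', w'', vb, f₁, f₂, f₃⟩
    obtain ⟨c, hc, w, g, hw, hwg⟩ := hS.exists_coequalizing h₂.mem (hS.biprod_mem ha hb)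
      (u := u' ≫ biprod.inl) (v := w' ≫ biprod.inr) (g := biprod.desc va vb)
      (by simp [e₃, f₂])
    simp only [Category.assoc] at hw
    refine ⟨c, hc, u ≫ biprod.inl ≫ w, w'' ≫ biprod.inr ≫ w, g, ?_, ?_, ?_⟩
    · rw [reassoc_of% e₁, hw, reassoc_of% f₁]
    · simp [hwg, e₂]
    · simp [hwg, f₃]

/-- The action of `H_S(-, t)` on a morphism `e : x ⟶ y`. -/
def HQuot.precomp (S : Set C) {x y t : C} (e : x ⟶ y) : HQuot S y t → HQuot S x t :=
  Quot.lift (fun h => Quot.mk _ ⟨h.s, h.mem, e ≫ h.f, h.g⟩)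
    fun _ _ ⟨a, ha, u, u', v, e₁, e₂, e₃⟩ =>
      Quot.sound ⟨a, ha, u, u', v, by simp only [Category.assoc, e₁], e₂, e₃⟩

namespace HQuot

variable {S : Set C}

lemma exists_eq_mk_eq_mk (hS : IsPreaisle S) {x t : C} (q q' : HQuot S x t) :
    ∃ (s : C) (hs : s ∈ S) (f f' : x ⟶ s) (g : s ⟶ t),
      q = Quot.mk _ ⟨s, hs, f, g⟩ ∧ q' = Quot.mk _ ⟨s, hs, f', g⟩ := by
  induction q using Quot.ind with | mk h =>
  induction q' using Quot.ind with | mk h' =>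
  have hb := hS.biprod_mem h.mem h'.mem
  refine ⟨_, hb, h.f ≫ biprod.inl, h'.f ≫ biprod.inr, biprod.desc h.g h'.g,
    Quot.sound ⟨_, hb, biprod.inl, 𝟙 _, biprod.desc h.g h'.g, ?_, ?_, ?_⟩,
    Quot.sound ⟨_, hb, biprod.inr, 𝟙 _, biprod.desc h.g h'.g, ?_, ?_, ?_⟩⟩ <;> simp

lemma mk_eq_mk_iff_killedOver (hS : IsPreaisle S) {x s t : C} (hs : s ∈ S)
    (f f' : x ⟶ s) (g : s ⟶ t) :
    (Quot.mk _ ⟨s, hs, f, g⟩ : HQuot S x t) = Quot.mk _ ⟨s, hs, f', g⟩ ↔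
      KilledOver S (f - f') g := by
  constructor
  · intro hq
    obtain ⟨a, ha, u, u', v, e₁, e₂, e₃⟩ :=
      (HRel.equivalence hS x t).eqvGen_iff.mp (Quot.eqvGen_exact hq)
    obtain ⟨c, hc, w, g', hw, hwg⟩ := hS.exists_coequalizing hs ha (e₂.trans e₃.symm)
    refine ⟨c, hc, u ≫ w, g', ?_, by rw [Category.assoc, hwg, e₂]⟩
    rw [Preadditive.sub_comp, sub_eq_zero, reassoc_of% e₁, hw]
  · rintro ⟨s', hs', w, g', hw, hwg⟩
    rw [Preadditive.sub_comp, sub_eq_zero] at hw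
    exact Quot.sound ⟨s', hs', w, w, g', hw, hwg, hwg⟩

lemma precomp_sigma_ι_injective [HasCoproducts.{v} C] (hS : IsPreaisle S)
    (hScoprod : ∀ {ι : Type v} (xs : ι → C), (∀ i, xs i ∈ S) → (∐ xs : C) ∈ S)
    {Λ : Type v} (x : Λ → C) (t : C) :
    Function.Injective fun (q : HQuot S (∐ x) t) l => precomp S (Sigma.ι x l) q := by
  intro q q' hq
  obtain ⟨s, hs, f, f', g, rfl, rfl⟩ := exists_eq_mk_eq_mk hS q q'
  refine (mk_eq_mk_iff_killedOver hS hs f f' g).2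
    (hS.killedOver_of_forall_sigma_ι hScoprod hs fun l => ?_)
  rw [Preadditive.comp_sub]
  exact (mk_eq_mk_iff_killedOver hS hs _ _ g).1 (congrFun hq l)

lemma precomp_sigma_ι_surjective [HasCoproducts.{v} C]
    (hScoprod : ∀ {ι : Type v} (xs : ι → C), (∀ i, xs i ∈ S) → (∐ xs : C) ∈ S)
    {Λ : Type v} (x : Λ → C) (t : C) :
    Function.Surjective fun (q : HQuot S (∐ x) t) l => precomp S (Sigma.ι x l) q := by
  intro q
  choose h hh using fun l => Quot.exists_rep (q l)
  set s : Λ → C := fun l => (h l).s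
  have hs := hScoprod s fun l => (h l).mem
  refine ⟨Quot.mk _ ⟨_, hs, Sigma.desc fun l => (h l).f ≫ Sigma.ι s l,
    Sigma.desc fun l => (h l).g⟩, funext fun l => ?_⟩
  rw [← hh l]
  exact Quot.sound ⟨_, hs, 𝟙 _, Sigma.ι s l, Sigma.desc fun l => (h l).g, by simp, by simp, by simp⟩

end HQuot

/-- if `T` has coproducts and the pre-aisle `S` is closed under coproducts,
then `H_S(-,t)` takes coproducts to products: the natural map
`H_S(∐ x_λ, t) ⟶ ∏ H_S(x_λ, t)` induced by the coproduct injections is an isomorphism. -/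
theorem statement6 [HasCoproducts.{v} C] (S : Set C) (hS : IsPreaisle S)
    (hScoprod : ∀ {ι : Type v} (xs : ι → C), (∀ i, xs i ∈ S) → (∐ xs : C) ∈ S)
    (t : C) {Λ : Type v} (x : Λ → C) :
    ∃ maps : ∀ l : Λ, HQuot S (∐ x) t → HQuot S (x l) t,
      -- the `λ`-component is induced by precomposition with the injection `x_λ ⟶ ∐ x_λ`
      (∀ (l : Λ) (h : HTilde S (∐ x) t),
        maps l (Quot.mk _ h) = Quot.mk _ ⟨h.s, h.mem, Sigma.ι x l ≫ h.f, h.g⟩) ∧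
      Function.Bijective (fun (q : HQuot S (∐ x) t) (l : Λ) => maps l q) :=
  ⟨fun l => HQuot.precomp S (Sigma.ι x l), fun _ _ => rfl,
    HQuot.precomp_sigma_ι_injective hS hScoprod x t,
    HQuot.precomp_sigma_ι_surjective hScoprod x t⟩
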